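/- arXiv:2203.00315 — 3 statements merged into one kernel-verified Lean document; each statement's English description precedes it below -/
import Mathlib

section
/- Let G₁, …, G_N be finite directed graphs each of whose vertices has a self-loop. Define the synchronous product graph P on V₁ × ⋯ × V_N, where (u₁,…,u_N) → (v₁,…,v_N) iff (u_i, v_i) ∈ E_i for all i. Define the operator-decomposed graph D on V₁ × ⋯ × V_N × {1,…,N}, where (Q, i) → (Q', i') iff i' = i mod N + 1, Q'[j] = Q[j] for j ≠ i, and (Q[i], Q'[i]) ∈ E_i. Then a configuration Q_goal is reachable from Q_init in P if and only if (Q_goal, 1) is reachable from (Q_init, 1) in D. -/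
/-- Synchronous product graph: all robots move simultaneously along edges of
their own roadmaps. -/
def SyncStep {N : ℕ} {V : Fin N → Type*} (E : ∀ i, V i → V i → Prop)
    (Q Q' : ∀ i, V i) : Prop :=
  ∀ i, E i (Q i) (Q' i)

/-- Operator-decomposed graph: exactly the acting robot `i` moves along one of
its roadmap edges, and the turn passes round-robin to the next robot. -/
def ODStep {N : ℕ} [NeZero N] {V : Fin N → Type*} (E : ∀ i, V i → V i → Prop)
    (s s' : (∀ i, V i) × Fin N) : Prop :=
  s'.2 = s.2 + 1 ∧ (∀ j, j ≠ s.2 → s'.1 j = s.1 j) ∧ E s.2 (s.1 s.2) (s'.1 s.2)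

open Fin.NatCast in
lemma sync_to_od {N : ℕ} [NeZero N] {V : Fin N → Type*}
    (E : ∀ i, V i → V i → Prop) {Q Q' : ∀ i, V i} (h : SyncStep E Q Q') :
    Relation.ReflTransGen (ODStep E) (Q, 0) (Q', 0) := by
  classical
  set R : ℕ → ∀ i, V i := fun k j => if j.val < k then Q' j else Q j with hR
  have key : ∀ k, k ≤ N → Relation.ReflTransGen (ODStep E) (Q, 0) (R k, (k : Fin N)) := by
    intro k
    induction k with
    | zero =>
        intro _
        have : R 0 = Q := by funext j; simp [hR]
        rw [this, Nat.cast_zero]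
    | succ k ih =>
        intro hk
        have hkN : k < N := hk
        have hkv : ((k : Fin N)).val = k := Fin.val_cast_of_lt hkN
        refine (ih (le_of_lt hkN)).tail ?_
        refine ⟨?_, ?_, ?_⟩
        · show ((k + 1 : ℕ) : Fin N) = (k : Fin N) + 1
          push_cast
          ring
        · intro j hj
          have : j.val ≠ k := by
            intro hjk
            apply hj
            apply Fin.ext
            rw [hkv, hjk]
          simp only [hR]
          by_cases hlt : j.val < k
          · simp [hlt, Nat.lt_succ_of_lt hlt]
          · have : ¬ j.val < k + 1 := by omega
            simp [hlt, this]
        · have h1 : R k (k : Fin N) = Q (k : Fin N) := by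
            simp [hR, hkv]
          have h2 : R (k + 1) (k : Fin N) = Q' (k : Fin N) := by
            simp [hR, hkv]
          show E (k : Fin N) (R k (k : Fin N)) (R (k+1) (k : Fin N))
          rw [h1, h2]
          exact h _
  have hN := key N le_rfl
  have hRN : R N = Q' := by funext j; simp [hR, j.isLt]
  have hN0 : ((N : ℕ) : Fin N) = 0 := by
    simp [Fin.natCast_self]
  rwa [hRN, hN0] at hN

lemma od_to_sync {N : ℕ} [NeZero N] {V : Fin N → Type*}
    (E : ∀ i, V i → V i → Prop) (hself : ∀ i (v : V i), E i v v)
    {s s' : (∀ i, V i) × Fin N} (h : ODStep E s s') :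
    SyncStep E s.1 s'.1 := by
  intro j
  by_cases hj : j = s.2
  · subst hj; exact h.2.2
  · rw [h.2.1 j hj]; exact hself j _

/-- Correctness of operator decomposition: if every vertex of every roadmap has
a self-loop, a configuration `Qgoal` is reachable from `Qinit` in the
synchronous product graph iff `(Qgoal, 1)` is reachable from `(Qinit, 1)` in
the operator-decomposed graph (the first robot's turn is index `0`). -/
theorem operator_decomposition_reachability
    (N : ℕ) [NeZero N] (V : Fin N → Type*) [∀ i, Fintype (V i)]
    (E : ∀ i, V i → V i → Prop)
    (hself : ∀ i (v : V i), E i v v)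
    (Qinit Qgoal : ∀ i, V i) :
    Relation.ReflTransGen (SyncStep E) Qinit Qgoal ↔
      Relation.ReflTransGen (ODStep E) (Qinit, 0) (Qgoal, 0) := by
  constructor
  · intro h
    induction h with
    | refl => exact .refl
    | tail _ hstep ih => exact ih.trans (sync_to_od E hstep)
  · intro h
    have : ∀ (s s' : (∀ i, V i) × Fin N),
        Relation.ReflTransGen (ODStep E) s s' →
        Relation.ReflTransGen (SyncStep E) s.1 s'.1 := by
      intro s s' hss
      induction hss with
      | refl => exact .refl
      | tail _ hstep ih => exact ih.tail (od_to_sync E hself hstep)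
    exact this _ _ h
end

section
/- Under the hypotheses of the previous statement, if Q_goal is reachable from Q_init in the synchronous product graph P via a path of length l, then (Q_goal, 1) is reachable from (Q_init, 1) in the operator-decomposed graph D via a path of length N·l. -/
open Fin.NatCast

/-- If `Qgoal` is reachable from `Qinit` in the synchronous product graph via a
path of length `l`, then `(Qgoal, 1)` is reachable from `(Qinit, 1)` in the
operator-decomposed graph via a path of length `N·l` (self-loops assumed at
every vertex of every roadmap). -/
theorem operator_decomposition_path_length
    (N : ℕ) [NeZero N] (V : Fin N → Type*) [∀ i, Fintype (V i)]
    (E : ∀ i, V i → V i → Prop)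
    (hself : ∀ i (v : V i), E i v v)
    (Qinit Qgoal : ∀ i, V i) (l : ℕ)
    (p : ℕ → ∀ i, V i)
    (hp0 : p 0 = Qinit) (hpl : p l = Qgoal)
    (hpstep : ∀ t < l, SyncStep E (p t) (p (t + 1))) :
    ∃ q : ℕ → (∀ i, V i) × Fin N,
      q 0 = (Qinit, 0) ∧ q (N * l) = (Qgoal, 0) ∧
      ∀ t < N * l, ODStep E (q t) (q (t + 1)) := by
  have hN : 0 < N := Nat.pos_of_ne_zero (NeZero.ne N)
  refine ⟨fun m => (fun j => if (j : ℕ) < m % N then p (m / N + 1) j else p (m / N) j,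
    (m : Fin N)), ?_, ?_, ?_⟩
  · simp [hp0]
  · have h1 : (N * l) % N = 0 := Nat.mul_mod_right N l
    have h2 : (N * l) / N = l := Nat.mul_div_cancel_left l hN
    simp [h1, h2, hpl]
  · intro m hm
    set t0 := m / N with ht0
    set k := m % N with hk
    have hkN : k < N := Nat.mod_lt _ hN
    have hmval : ((m : Fin N) : ℕ) = k := Fin.val_natCast m N ▸ rfl
    have ht0l : t0 < l := Nat.div_lt_of_lt_mul hm
    have hedge := hpstep t0 ht0l
    have hmdecomp : m = N * t0 + k := by
      rw [ht0, hk]; exact (Nat.div_add_mod m N).symm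
    have hsucc : (m + 1) % N = (if k + 1 = N then 0 else k + 1) ∧
        (m + 1) / N = (if k + 1 = N then t0 + 1 else t0) := by
      by_cases h : k + 1 = N
      · have : m + 1 = N * (t0 + 1) := by rw [Nat.mul_add, Nat.mul_one]; omega
        simp [h, this, Nat.mul_mod_right, Nat.mul_div_cancel_left _ hN]
      · have hlt : k + 1 < N := lt_of_le_of_ne hkN h
        have : m + 1 = N * t0 + (k + 1) := by omega
        rw [this]
        simp [h, Nat.mul_add_mod, Nat.mod_eq_of_lt hlt, Nat.mul_add_div hN,
          Nat.div_eq_of_lt hlt]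
    refine ⟨by push_cast; ring, ?_, ?_⟩
    · intro j hj
      have hjk : (j : ℕ) ≠ k := fun h => hj (by
        apply Fin.ext; rw [hmval, ← h])
      simp only [← hk, ← ht0]
      by_cases h : k + 1 = N
      · have hjlt : (j : ℕ) < k := by have := j.isLt; omega
        rw [hsucc.1, hsucc.2]
        simp [h, hjlt, Nat.not_lt_zero]
      · rw [hsucc.1, hsucc.2]
        have hcond : ((j : ℕ) < k + 1) = ((j : ℕ) < k) := by
          apply propext; omega
        simp only [if_neg h, hcond]
    · simp only [hmval, ← hk, ← ht0]
      have hnew : (if k < (m + 1) % N then ((m + 1) / N + 1) else (m + 1) / N) = t0 + 1 := by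
        by_cases h : k + 1 = N
        · rw [hsucc.1, hsucc.2]; simp [h]
        · rw [hsucc.1, hsucc.2]; simp [h]
      have hold : ¬ (k < k) := lt_irrefl k
      simp only [if_neg hold]
      have : (if k < (m+1) % N then p ((m+1)/N + 1) ((m:Fin N))
          else p ((m+1)/N) ((m:Fin N))) = p (t0 + 1) ((m:Fin N)) := by
        split_ifs at hnew ⊢ <;> rw [hnew]
      rw [this]
      exact hedge _
end

section
/- Let π = (Q⁰, 1), (Q¹, i₁), …, (Q^m, i_m) be a path in the operator-decomposed graph D (round-robin turn order, one robot moves per step) from (Q_init, 1) to a node with all robots at their goals, where between consecutive nodes only the acting robot's coordinate changes along an edge of its roadmap. Then grouping the steps into blocks of N consecutive moves (padding the last block with self-loops) yields synchronized paths π_1, …, π_N of common length T = ⌈m / N⌉ satisfying the endpoint condition of the practical MRMP problem, provided every roadmap has self-loops. -/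
/-- Backtracking a solution: a path of length `m` in the operator-decomposed
graph from `(Q_init, 1)` to a node where all robots are at their goals, grouped
into blocks of `N` consecutive moves (the last block padded by self-loops),
yields synchronized robot-wise paths of common length `T = ⌈m / N⌉` on the
individual roadmaps satisfying the endpoint condition of the practical MRMP
problem, provided every roadmap has self-loops. -/
theorem od_path_to_synchronized_paths
    (N : ℕ) [NeZero N] (V : Fin N → Type*) [∀ i, Fintype (V i)]
    (E : ∀ i, V i → V i → Prop)
    (hself : ∀ i (v : V i), E i v v)
    (Qinit Qgoal : ∀ i, V i)
    (q : ℕ → (∀ i, V i) × Fin N) (m : ℕ)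
    (hq0 : q 0 = (Qinit, 0))
    (hqm : (q m).1 = Qgoal)
    (hqstep : ∀ t < m, ODStep E (q t) (q (t + 1))) :
    ∃ π : ∀ i, ℕ → V i, ∀ i,
      π i 0 = Qinit i ∧
      π i ((m + N - 1) / N) = Qgoal i ∧
      ∀ t < (m + N - 1) / N, E i (π i t) (π i (t + 1)) := by
  have hN : 0 < N := Nat.pos_of_ne_zero (NeZero.ne N)
  -- the turn at step s is s mod N
  open Fin.NatCast in
  have hturn : ∀ s, s ≤ m → (q s).2 = (s : Fin N) := by
    intro s
    induction s with
    | zero => intro _; rw [hq0]; simp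
    | succ s ih =>
      intro hs
      have hsm : s < m := hs
      rw [(hqstep s hsm).1, ih hsm.le]
      push_cast
      ring
  -- if robot i is not acting at step s (or s ≥ m), its position is unchanged
  have hA : ∀ (i : Fin N) (s : ℕ), ¬(s < m ∧ s % N = i.val) →
      (q (min (s+1) m)).1 i = (q (min s m)).1 i := by
    intro i s h
    by_cases hsm : s < m
    · have hmod : s % N ≠ i.val := fun hh => h ⟨hsm, hh⟩
      rw [min_eq_left hsm, min_eq_left hsm.le]
      have hne : i ≠ (q s).2 := by
        rw [hturn s hsm.le]
        intro hh
        apply hmod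
        rw [← Fin.val_natCast s, ← hh]
      exact (hqstep s hsm).2.1 i hne
    · push_neg at hsm
      rw [min_eq_right hsm, min_eq_right (hsm.trans (Nat.le_succ s))]
  -- if robot i acts at step s < m, it moves along an edge
  have hB : ∀ (i : Fin N) (s : ℕ), s < m → s % N = i.val →
      E i ((q (min s m)).1 i) ((q (min (s+1) m)).1 i) := by
    intro i s hsm hmod
    rw [min_eq_left (show s + 1 ≤ m from hsm), min_eq_left hsm.le]
    have hti : (q s).2 = i := by
      rw [hturn s hsm.le]
      apply Fin.ext
      rw [Fin.val_natCast]
      exact hmod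
    have h := (hqstep s hsm).2.2
    rw [hti] at h
    exact h
  -- constancy over a range of non-acting steps
  have hConst : ∀ (i : Fin N) (a k : ℕ),
      (∀ j < k, ¬(a + j < m ∧ (a + j) % N = i.val)) →
      (q (min (a + k) m)).1 i = (q (min a m)).1 i := by
    intro i a k
    induction k with
    | zero => intro _; rfl
    | succ k ih =>
      intro h
      have h1 := hA i (a + k) (h k (Nat.lt_succ_self k))
      have h2 := ih (fun j hj => h j (hj.trans (Nat.lt_succ_self k)))
      calc (q (min (a + (k+1)) m)).1 i = (q (min ((a+k)+1) m)).1 i := rfl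
        _ = (q (min (a+k) m)).1 i := h1
        _ = (q (min a m)).1 i := h2
  have hT : m ≤ ((m + N - 1) / N) * N := by
    have h1 := Nat.div_add_mod (m + N - 1) N
    have h2 := Nat.mod_lt (m + N - 1) hN
    rw [mul_comm]
    generalize N * ((m + N - 1) / N) = X at h1 ⊢
    generalize (m + N - 1) % N = r at h1 h2
    omega
  refine ⟨fun i t => (q (min (t * N) m)).1 i, fun i => ⟨?_, ?_, ?_⟩⟩
  · simp [hq0]
  · show (q (min (((m + N - 1) / N) * N) m)).1 i = Qgoal i
    rw [min_eq_right hT, hqm]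
  · intro t _
    show E i ((q (min (t * N) m)).1 i) ((q (min ((t+1) * N) m)).1 i)
    have hiN : i.val < N := i.isLt
    -- positions are constant before the acting step within the block
    have h1 : (q (min (t * N + i.val) m)).1 i = (q (min (t * N) m)).1 i := by
      apply hConst
      intro j hj hcon
      have : (t * N + j) % N = j := by
        rw [Nat.add_comm, Nat.add_mul_mod_self_right]
        exact Nat.mod_eq_of_lt (hj.trans hiN)
      omega
    -- and after the acting step until the end of the block
    have h2 : (q (min ((t+1) * N) m)).1 i = (q (min (t * N + i.val + 1) m)).1 i := by
      have harg : (t+1) * N = (t * N + i.val + 1) + (N - i.val - 1) := by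
        rw [add_one_mul]
        omega
      rw [harg]
      apply hConst
      intro j hj hcon
      have : (t * N + i.val + 1 + j) % N = i.val + 1 + j := by
        rw [show t * N + i.val + 1 + j = (i.val + 1 + j) + t * N by ring,
          Nat.add_mul_mod_self_right]
        exact Nat.mod_eq_of_lt (by omega)
      omega
    rw [← h1, h2]
    by_cases hsm : t * N + i.val < m
    · by_cases hmod : (t * N + i.val) % N = i.val
      · exact hB i (t * N + i.val) hsm hmod
      · exfalso
        apply hmod
        rw [Nat.add_comm, Nat.add_mul_mod_self_right]
        exact Nat.mod_eq_of_lt hiN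
    · rw [hA i (t * N + i.val) (fun hc => hsm hc.1)]
      exact hself i _
end
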